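/- arXiv:1702.07148 — 2 statements merged into one kernel-verified Lean document; each statement's English description precedes it below -/
import Mathlib

section
/- (Micchelli; nonsingularity of the multiquadric interpolation matrix.) Let x_1, …, x_n be pairwise distinct points in ℝ^d and let ε > 0. Then the n × n symmetric matrix A with entries A_{ik} = √(1 + ε² ‖x_i − x_k‖²) is invertible. Moreover, A has exactly one positive eigenvalue and n − 1 negative eigenvalues. -/
/-!
For `a ≥ 1` one has `√a = 1 + π^(-1/2) ∫₀^∞ (e^(-s²) - e^(-a s²)) / s² ds`: both sides vanish
at `a = 1`, and differentiating under the integral sign gives the Gaussian integral `√(π / a) / 2`.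
Hence, when `∑ cᵢ = 0`, the quadratic form `∑ cᵢ c_k √(1 + ε² ‖xᵢ - x_k‖²)` equals
`-π^(-1/2) ∫₀^∞ e^(-s²) s⁻² Q(ε² s²) ds`, where `Q(τ) = ∑ cᵢ c_k e^(-τ ‖xᵢ - x_k‖²)` is the
quadratic form of the Gaussian kernel. The Gaussian kernel is positive semidefinite (expand `exp`
of the Gram matrix in a power series and apply the Schur product theorem), and for distinct nodes
it tends to the identity as `τ → ∞`, so `Q(τ) → ∑ cᵢ² > 0`. Thus the multiquadric matrix is
negative definite on the hyperplane `∑ cᵢ = 0`. That hyperplane meets the span of any two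
eigenvectors, so at most one eigenvalue is nonnegative, and the trace `n > 0` forces it to be
positive.
-/

open Real Matrix MeasureTheory Set Filter Topology Nat
open scoped ComplexOrder

namespace Matrix

variable {ι : Type*} [Fintype ι]

theorem PosSemidef.map_pow {𝕜 : Type*} [RCLike 𝕜] {A : Matrix ι ι 𝕜} (hA : A.PosSemidef) :
    ∀ m : ℕ, (A.map (· ^ m)).PosSemidef
  | 0 => by
    convert posSemidef_vecMulVec_self_star (1 : ι → 𝕜) using 1
    ext i k
    simp [vecMulVec]
  | m + 1 => by
    convert (hA.map_pow m).hadamard hA using 1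
    ext i k
    simp [pow_succ]

theorem PosSemidef.map_exp {A : Matrix ι ι ℝ} (hA : A.PosSemidef) : (A.map exp).PosSemidef := by
  refine posSemidef_iff_dotProduct_mulVec.mpr ⟨hA.isHermitian.map _ fun _ => rfl, fun c => ?_⟩
  have hsum : HasSum (fun m : ℕ => (m ! : ℝ)⁻¹ * (star c ⬝ᵥ A.map (· ^ m) *ᵥ c))
      (star c ⬝ᵥ A.map exp *ᵥ c) := by
    simp only [dotProduct, mulVec, Finset.mul_sum]
    refine hasSum_sum fun i _ => hasSum_sum fun k _ => ?_
    rw [show star c i * (A.map exp i k * c k) = star c i * c k * exp (A i k) by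
      rw [map_apply]; ring, exp_eq_exp_ℝ]
    refine ((NormedSpace.expSeries_div_hasSum_exp (A i k)).mul_left _).congr_fun fun m => ?_
    simp only [map_apply]
    ring
  exact hsum.nonneg fun m => mul_nonneg (by positivity) ((hA.map_pow m).dotProduct_mulVec_nonneg c)

def CondNegDef (A : Matrix ι ι ℝ) : Prop :=
  ∀ v : ι → ℝ, v ≠ 0 → ∑ i, v i = 0 → v ⬝ᵥ A *ᵥ v < 0

theorem dotProduct_mulVec_self_eq_sum (A : Matrix ι ι ℝ) (c : ι → ℝ) :
    c ⬝ᵥ A *ᵥ c = ∑ i, ∑ k, c i * c k * A i k := by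
  simp only [dotProduct, mulVec, Finset.mul_sum]
  exact Finset.sum_congr rfl fun i _ => Finset.sum_congr rfl fun k _ => by ring

end Matrix

section GaussianKernel

variable {ι E : Type*} [Fintype ι] [NormedAddCommGroup E] [InnerProductSpace ℝ E]

theorem posSemidef_gaussianKernel (x : ι → E) {τ : ℝ} (hτ : 0 ≤ τ) :
    (of fun i k => exp (-τ * ‖x i - x k‖ ^ 2)).PosSemidef := by
  classical
  have hM : ((2 * τ) • gram ℝ x).map exp |>.PosSemidef :=
    ((posSemidef_gram ℝ x).smul (by positivity)).map_exp
  convert hM.mul_mul_conjTranspose_same (diagonal fun i => exp (-τ * ‖x i‖ ^ 2)) using 1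
  ext i k
  simp only [of_apply, diagonal_conjTranspose, diagonal_mul, mul_diagonal, map_apply,
    Matrix.smul_apply, gram_apply, smul_eq_mul, star_trivial, ← exp_add, norm_sub_sq_real]
  congr 1
  ring

omit [Fintype ι] [InnerProductSpace ℝ E] in
theorem tendsto_gaussianKernel_atTop [DecidableEq ι] {x : ι → E} (hx : Function.Injective x) :
    Tendsto (fun τ : ℝ => of fun i k => exp (-τ * ‖x i - x k‖ ^ 2)) atTop (𝓝 1) := by
  refine tendsto_pi_nhds.mpr fun i => tendsto_pi_nhds.mpr fun k => ?_
  rcases eq_or_ne i k with rfl | hik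
  · simp
  · have hr : 0 < ‖x i - x k‖ ^ 2 := by
      have := norm_pos_iff.mpr (sub_ne_zero.mpr (hx.ne hik))
      positivity
    have := tendsto_exp_atBot.comp (tendsto_neg_atTop_atBot.comp (tendsto_id.atTop_mul_const hr))
    simpa [one_apply_ne hik, Function.comp_def] using this

omit [InnerProductSpace ℝ E] in
theorem eventually_dotProduct_gaussianKernel_pos {x : ι → E} (hx : Function.Injective x)
    {c : ι → ℝ} (hc : c ≠ 0) :
    ∀ᶠ τ in atTop, 0 < c ⬝ᵥ (of fun i k => exp (-τ * ‖x i - x k‖ ^ 2)) *ᵥ c := by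
  classical
  have hlim : Tendsto (fun τ : ℝ => c ⬝ᵥ (of fun i k => exp (-τ * ‖x i - x k‖ ^ 2)) *ᵥ c) atTop
      (𝓝 (c ⬝ᵥ (1 : Matrix ι ι ℝ) *ᵥ c)) :=
    ((continuous_const.dotProduct (continuous_id.matrix_mulVec continuous_const)).tendsto 1).comp
      (tendsto_gaussianKernel_atTop hx)
  rw [one_mulVec] at hlim
  exact hlim.eventually_const_lt (by simpa using dotProduct_self_star_pos_iff.mpr hc)

end GaussianKernel

noncomputable def sqrtIntegrand (a s : ℝ) : ℝ := (exp (-s ^ 2) - exp (-a * s ^ 2)) / s ^ 2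

theorem measurable_sqrtIntegrand (a : ℝ) : Measurable (sqrtIntegrand a) := by
  unfold sqrtIntegrand
  fun_prop

theorem sqrtIntegrand_nonneg {a : ℝ} (ha : 1 ≤ a) (s : ℝ) : 0 ≤ sqrtIntegrand a s := by
  refine div_nonneg (sub_nonneg.mpr (exp_le_exp.mpr ?_)) (sq_nonneg s)
  nlinarith [sq_nonneg s]

theorem sqrtIntegrand_le_exp (a : ℝ) {s : ℝ} (hs : 1 ≤ s) : sqrtIntegrand a s ≤ exp (-s ^ 2) := by
  have hs2 : 1 ≤ s ^ 2 := by nlinarith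
  rw [sqrtIntegrand, div_le_iff₀ (by positivity)]
  nlinarith [exp_pos (-s ^ 2), exp_pos (-a * s ^ 2)]

theorem sqrtIntegrand_le_sub_one {a : ℝ} (ha : 1 ≤ a) (s : ℝ) : sqrtIntegrand a s ≤ a - 1 := by
  rcases eq_or_ne s 0 with rfl | hs
  · simp [sqrtIntegrand]; linarith
  rw [sqrtIntegrand, div_le_iff₀ (by positivity)]
  have htangent := add_one_le_exp (-(a - 1) * s ^ 2)
  have hexp : exp (-s ^ 2) ≤ 1 := exp_le_one_iff.mpr (by nlinarith)
  have hsplit : exp (-a * s ^ 2) = exp (-s ^ 2) * exp (-(a - 1) * s ^ 2) := by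
    rw [← exp_add]; ring_nf
  have hd : 0 ≤ (a - 1) * s ^ 2 := by positivity
  nlinarith [exp_pos (-s ^ 2)]

theorem integrableOn_sqrtIntegrand {a : ℝ} (ha : 1 ≤ a) :
    IntegrableOn (sqrtIntegrand a) (Ioi 0) := by
  have hmeas := (measurable_sqrtIntegrand a).aestronglyMeasurable (μ := volume)
  rw [← Ioc_union_Ioi_eq_Ioi zero_le_one]
  refine IntegrableOn.union ?_ ?_
  · refine Integrable.mono' (integrableOn_const (C := a - 1) measure_Ioc_lt_top.ne)
      hmeas.restrict (Eventually.of_forall fun s => ?_)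
    rw [norm_of_nonneg (sqrtIntegrand_nonneg ha s)]
    exact sqrtIntegrand_le_sub_one ha s
  · refine Integrable.mono' (integrable_exp_neg_mul_sq one_pos).integrableOn hmeas.restrict ?_
    filter_upwards [ae_restrict_mem measurableSet_Ioi] with s hs
    rw [norm_of_nonneg (sqrtIntegrand_nonneg ha s), neg_one_mul]
    exact sqrtIntegrand_le_exp a (le_of_lt hs)

theorem hasDerivAt_integral_sqrtIntegrand {a : ℝ} (ha : 1 ≤ a) :
    HasDerivAt (fun b => ∫ s in Ioi 0, sqrtIntegrand b s) (√(π / a) / 2) a := by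
  have hderiv : ∀ b s, s ≠ 0 →
      HasDerivAt (fun b => sqrtIntegrand b s) (exp (-b * s ^ 2)) b := by
    intro b s hs
    have := (((hasDerivAt_id b).neg.mul_const (s ^ 2)).exp.const_sub (exp (-s ^ 2))).div_const
      (s ^ 2)
    refine this.congr_deriv ?_
    simp only [Pi.neg_apply, id]
    field_simp
  rw [← integral_gaussian_Ioi a]
  refine (hasDerivAt_integral_of_dominated_loc_of_deriv_le (μ := volume.restrict (Ioi 0))
    (F' := fun b s => exp (-b * s ^ 2)) (bound := fun s => exp (-(1 / 2) * s ^ 2))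
    (Metric.ball_mem_nhds a one_half_pos)
    (Eventually.of_forall fun b => (measurable_sqrtIntegrand b).aestronglyMeasurable)
    (integrableOn_sqrtIntegrand ha) (by fun_prop) ?_
    (integrable_exp_neg_mul_sq one_half_pos).restrict ?_).2
  · refine Eventually.of_forall fun s b hb => ?_
    rw [norm_of_nonneg (exp_pos _).le, exp_le_exp]
    have : a - 1 / 2 < b := by linarith [(abs_lt.mp (Real.dist_eq b a ▸ Metric.mem_ball.mp hb)).1]
    nlinarith [sq_nonneg s]
  · filter_upwards [ae_restrict_mem measurableSet_Ioi] with s hs b _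
    exact hderiv b s hs.ne'

theorem integral_sqrtIntegrand {a : ℝ} (ha : 1 ≤ a) :
    ∫ s in Ioi 0, sqrtIntegrand a s = √π * (√a - 1) := by
  have hderiv : ∀ b, 1 ≤ b → HasDerivAt (fun b => √π * (√b - 1)) (√(π / b) / 2) b := by
    intro b hb
    refine (((hasDerivAt_sqrt (by positivity)).sub_const 1).const_mul √π).congr_deriv ?_
    rw [sqrt_div' π (by positivity)]
    field_simp
  refine eq_of_has_deriv_right_eq (a := 1) (b := a)
    (fun b hb => (hasDerivAt_integral_sqrtIntegrand hb.1).hasDerivWithinAt)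
    (fun b hb => (hderiv b hb.1).hasDerivWithinAt)
    (fun b hb => (hasDerivAt_integral_sqrtIntegrand hb.1).continuousAt.continuousWithinAt)
    (fun b hb => (hderiv b hb.1).continuousAt.continuousWithinAt)
    (by simp [sqrtIntegrand]) a ⟨ha, le_rfl⟩

section QuadraticForms

variable {ι : Type*} [Fintype ι]

theorem sum_mul_sqrt_eq_integral {a : ι → ι → ℝ} (ha : ∀ i k, 1 ≤ a i k) {c : ι → ℝ}
    (hc : ∑ i, c i = 0) :
    ∑ i, ∑ k, c i * c k * √(a i k) =
      (∫ s in Ioi 0, ∑ i, ∑ k, c i * c k * sqrtIntegrand (a i k) s) / √π := by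
  have hint : ∀ i k, Integrable (fun s => c i * c k * sqrtIntegrand (a i k) s)
      (volume.restrict (Ioi 0)) := fun i k => (integrableOn_sqrtIntegrand (ha i k)).const_mul _
  have hterm : ∀ i k, c i * c k * √(a i k) =
      c i * c k + (∫ s in Ioi 0, c i * c k * sqrtIntegrand (a i k) s) / √π := by
    intro i k
    have hπ : √π ≠ 0 := (sqrt_pos.mpr pi_pos).ne'
    rw [integral_const_mul, integral_sqrtIntegrand (ha i k)]
    field_simp
    ring
  simp_rw [hterm, Finset.sum_add_distrib, ← Finset.sum_mul_sum, hc, zero_mul, zero_add,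
    ← Finset.sum_div]
  rw [integral_finsetSum _ fun i _ => integrable_finsetSum _ fun k _ => hint i k]
  simp_rw [integral_finsetSum _ fun k _ => hint _ k]

theorem sum_mul_sqrtIntegrand_eq {c : ι → ℝ} (hc : ∑ i, c i = 0) (a : ι → ι → ℝ) (s : ℝ) :
    ∑ i, ∑ k, c i * c k * sqrtIntegrand (a i k) s =
      -(exp (-s ^ 2) / s ^ 2 * ∑ i, ∑ k, c i * c k * exp (-(a i k - 1) * s ^ 2)) := by
  have hsplit : ∀ i k, sqrtIntegrand (a i k) s =
      exp (-s ^ 2) / s ^ 2 - exp (-s ^ 2) / s ^ 2 * exp (-(a i k - 1) * s ^ 2) := by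
    intro i k
    rw [sqrtIntegrand, mul_comm, div_mul_eq_mul_div, ← exp_add, sub_div]
    ring_nf
  simp_rw [hsplit, mul_sub, Finset.sum_sub_distrib, ← Finset.sum_mul, ← Finset.mul_sum, hc,
    mul_zero, Finset.sum_const_zero, zero_mul, zero_sub, Finset.mul_sum, mul_left_comm]

end QuadraticForms

theorem setIntegral_Ioi_pos_of_eventually_pos {f : ℝ → ℝ} {a : ℝ} (hfi : IntegrableOn f (Ioi a))
    (hf : ∀ s ∈ Ioi a, 0 ≤ f s) (hpos : ∀ᶠ s in atTop, 0 < f s) : 0 < ∫ s in Ioi a, f s := by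
  obtain ⟨S, hS⟩ := eventually_atTop.mp hpos
  rw [setIntegral_pos_iff_support_of_nonneg_ae
    ((ae_restrict_iff' measurableSet_Ioi).mpr (Eventually.of_forall hf)) hfi]
  refine (by simp : 0 < volume (Ioi (max S a))).trans_le (measure_mono fun s hs => ?_)
  exact ⟨(hS s (le_of_max_le_left hs.le)).ne', lt_of_le_of_lt (le_max_right S a) hs⟩

theorem condNegDef_multiquadric {ι E : Type*} [Fintype ι] [NormedAddCommGroup E]
    [InnerProductSpace ℝ E] {x : ι → E} (hx : Function.Injective x) {ε : ℝ} (hε : ε ≠ 0) :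
    (of fun i k => √(1 + ε ^ 2 * ‖x i - x k‖ ^ 2)).CondNegDef := by
  intro c hc0 hc
  set Q : ℝ → ℝ := fun τ => c ⬝ᵥ (of fun i k => exp (-τ * ‖x i - x k‖ ^ 2)) *ᵥ c
  have hQ_nonneg : ∀ τ, 0 ≤ τ → 0 ≤ Q τ := fun τ hτ => by
    simpa [Q, neg_mul] using (posSemidef_gaussianKernel x hτ).dotProduct_mulVec_nonneg c
  have hQ_pos : ∀ᶠ τ in atTop, 0 < Q τ := eventually_dotProduct_gaussianKernel_pos hx hc0
  set f : ℝ → ℝ := fun s => exp (-s ^ 2) / s ^ 2 * Q (ε ^ 2 * s ^ 2)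
  have ha : ∀ i k, 1 ≤ 1 + ε ^ 2 * ‖x i - x k‖ ^ 2 := fun i k => by
    have : 0 ≤ ε ^ 2 * ‖x i - x k‖ ^ 2 := by positivity
    linarith
  have hf : ∀ s, ∑ i, ∑ k, c i * c k * sqrtIntegrand (1 + ε ^ 2 * ‖x i - x k‖ ^ 2) s = -f s := by
    intro s
    simp only [sum_mul_sqrtIntegrand_eq hc, f, Q, dotProduct_mulVec_self_eq_sum, of_apply,
      add_sub_cancel_left]
    ring_nf
  have hf_int : IntegrableOn f (Ioi 0) := by
    have : IntegrableOn (fun s => -∑ i, ∑ k, c i * c k *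
        sqrtIntegrand (1 + ε ^ 2 * ‖x i - x k‖ ^ 2) s) (Ioi 0) :=
      (integrable_finsetSum _ fun i _ => integrable_finsetSum _ fun k _ =>
        (integrableOn_sqrtIntegrand (ha i k)).const_mul (c i * c k)).neg
    simpa only [hf, neg_neg] using this
  have hf_pos : 0 < ∫ s in Ioi 0, f s := by
    refine setIntegral_Ioi_pos_of_eventually_pos hf_int
      (fun s _ => mul_nonneg (by positivity) (hQ_nonneg _ (by positivity))) ?_
    filter_upwards [eventually_gt_atTop 0,
      ((tendsto_pow_atTop two_ne_zero).const_mul_atTop (by positivity : 0 < ε ^ 2)).eventually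
        hQ_pos] with s hs hQs
    exact mul_pos (by positivity) hQs
  rw [dotProduct_mulVec_self_eq_sum]
  simp only [of_apply]
  rw [sum_mul_sqrt_eq_integral ha hc]
  simp_rw [hf, integral_neg]
  exact div_neg_of_neg_of_pos (neg_neg_of_pos hf_pos) (sqrt_pos.mpr pi_pos)

namespace Matrix

variable {ι : Type*} [Fintype ι] [DecidableEq ι]

theorem exists_ne_zero_dotProduct_eq_zero (s : ι → ℝ) {i j : ι} (hij : i ≠ j) :
    ∃ w : ι → ℝ, w ≠ 0 ∧ (∀ k, w k ≠ 0 → k = i ∨ k = j) ∧ s ⬝ᵥ w = 0 := by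
  by_cases hs : s i = 0
  · refine ⟨Pi.single i 1, by simp, fun k hk => .inl ?_, by simp [hs]⟩
    by_contra h
    simp [h] at hk
  · refine ⟨Pi.single i (s j) - Pi.single j (s i), fun h => hs ?_, fun k hk => ?_, ?_⟩
    · simpa [hij] using congr_fun h j
    · by_contra h
      simp [not_or.mp h] at hk
    · simp [dotProduct_sub, mul_comm]

variable {A : Matrix ι ι ℝ}

theorem IsHermitian.dotProduct_mulVec_eigenvectorUnitary (hA : A.IsHermitian) (w : ι → ℝ) :
    (hA.eigenvectorUnitary : Matrix ι ι ℝ) *ᵥ w ⬝ᵥ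
        A *ᵥ ((hA.eigenvectorUnitary : Matrix ι ι ℝ) *ᵥ w) =
      ∑ k, hA.eigenvalues k * w k ^ 2 := by
  set U : Matrix ι ι ℝ := (hA.eigenvectorUnitary : Matrix ι ι ℝ)
  have hdiag : Uᵀ * A * U = diagonal hA.eigenvalues := by
    simpa [Unitary.conjStarAlgAut_star_apply, star_eq_conjTranspose] using
      hA.conjStarAlgAut_star_eigenvectorUnitary
  rw [mulVec_mulVec, ← vecMul_transpose, ← dotProduct_mulVec, mulVec_mulVec, ← Matrix.mul_assoc,
    hdiag]
  simp [dotProduct, mulVec_diagonal, sq, mul_left_comm]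

theorem CondNegDef.eq_of_eigenvalues_nonneg (hneg : A.CondNegDef) (hA : A.IsHermitian) {i j : ι}
    (hi : 0 ≤ hA.eigenvalues i) (hj : 0 ≤ hA.eigenvalues j) : i = j := by
  by_contra hij
  set U : Matrix ι ι ℝ := (hA.eigenvectorUnitary : Matrix ι ι ℝ)
  obtain ⟨w, hw0, hw_supp, hw_sum⟩ := exists_ne_zero_dotProduct_eq_zero (1 ᵥ* U) hij
  have hUw : U *ᵥ w ≠ 0 := fun h => hw0 <| by
    rw [← one_mulVec w, ← Unitary.coe_star_mul_self hA.eigenvectorUnitary, ← mulVec_mulVec, h,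
      mulVec_zero]
  have hneg' := hneg _ hUw (by rwa [← one_dotProduct, dotProduct_mulVec])
  rw [hA.dotProduct_mulVec_eigenvectorUnitary] at hneg'
  refine hneg'.not_ge (Finset.sum_nonneg fun k _ => ?_)
  by_cases hk : w k = 0
  · simp [hk]
  · rcases hw_supp k hk with rfl | rfl <;> positivity

theorem CondNegDef.exists_eigenvalue_pos (hneg : A.CondNegDef) (hA : A.IsHermitian)
    (htr : 0 < A.trace) : ∃ i₀, 0 < hA.eigenvalues i₀ ∧ ∀ i, i ≠ i₀ → hA.eigenvalues i < 0 := by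
  rw [hA.trace_eq_sum_eigenvalues] at htr
  obtain ⟨i₀, -, hi₀⟩ := Finset.exists_lt_of_sum_lt (s := Finset.univ) (f := 0)
    (g := hA.eigenvalues) (by simpa using htr)
  refine ⟨i₀, hi₀, fun i hi => lt_of_not_ge fun h => hi ?_⟩
  exact hneg.eq_of_eigenvalues_nonneg hA h hi₀.le

theorem CondNegDef.card_eigenvalues_pos (hneg : A.CondNegDef) (hA : A.IsHermitian)
    (htr : 0 < A.trace) : (Finset.univ.filter fun i => 0 < hA.eigenvalues i).card = 1 := by
  obtain ⟨i₀, hpos, hneg'⟩ := hneg.exists_eigenvalue_pos hA htr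
  rw [Finset.card_eq_one]
  refine ⟨i₀, Finset.ext fun i => ?_⟩
  simp only [Finset.mem_filter, Finset.mem_univ, true_and, Finset.mem_singleton]
  exact ⟨fun h => by_contra fun hi => (hneg' i hi).not_gt h, fun h => h ▸ hpos⟩

theorem CondNegDef.card_eigenvalues_neg (hneg : A.CondNegDef) (hA : A.IsHermitian)
    (htr : 0 < A.trace) :
    (Finset.univ.filter fun i => hA.eigenvalues i < 0).card = Fintype.card ι - 1 := by
  obtain ⟨i₀, hpos, hneg'⟩ := hneg.exists_eigenvalue_pos hA htr
  rw [← Finset.card_univ, ← Finset.card_erase_of_mem (Finset.mem_univ i₀)]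
  congr 1
  ext i
  simp only [Finset.mem_filter, Finset.mem_univ, true_and, Finset.mem_erase, and_true]
  exact ⟨fun h hi => (hi ▸ hpos).not_gt h, hneg' i⟩

theorem CondNegDef.isUnit (hneg : A.CondNegDef) (hA : A.IsHermitian) (htr : 0 < A.trace) :
    IsUnit A := by
  obtain ⟨i₀, hpos, hneg'⟩ := hneg.exists_eigenvalue_pos hA htr
  rw [isUnit_iff_isUnit_det, hA.det_eq_prod_eigenvalues, isUnit_iff_ne_zero]
  refine Finset.prod_ne_zero_iff.mpr fun i _ => ?_
  rcases eq_or_ne i i₀ with rfl | hi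
  · simpa using hpos.ne'
  · simpa using (hneg' i hi).ne

end Matrix

/-- Micchelli's theorem for the multiquadric: for pairwise distinct nodes and `ε > 0`,
the symmetric matrix `A_{ik} = √(1 + ε² ‖x_i − x_k‖²)` is invertible, and it has
exactly one positive eigenvalue and `n − 1` negative eigenvalues. -/
theorem stmt9 {d n : ℕ} (hn : 0 < n) (x : Fin n → EuclideanSpace ℝ (Fin d))
    (hx : Function.Injective x) (ε : ℝ) (hε : 0 < ε) :
    IsUnit (Matrix.of fun i k => Real.sqrt (1 + ε ^ 2 * ‖x i - x k‖ ^ 2) :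
        Matrix (Fin n) (Fin n) ℝ) ∧
    ∃ hA : (Matrix.of fun i k => Real.sqrt (1 + ε ^ 2 * ‖x i - x k‖ ^ 2) :
        Matrix (Fin n) (Fin n) ℝ).IsHermitian,
      (Finset.univ.filter fun i => 0 < hA.eigenvalues i).card = 1 ∧
      (Finset.univ.filter fun i => hA.eigenvalues i < 0).card = n - 1 := by
  have hA : (Matrix.of fun i k => √(1 + ε ^ 2 * ‖x i - x k‖ ^ 2) :
      Matrix (Fin n) (Fin n) ℝ).IsHermitian := by
    ext i k
    simp [norm_sub_rev]
  have hneg := condNegDef_multiquadric hx hε.ne'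
  have htr : 0 < (Matrix.of fun i k => √(1 + ε ^ 2 * ‖x i - x k‖ ^ 2) :
      Matrix (Fin n) (Fin n) ℝ).trace := by
    simpa [Matrix.trace] using hn
  refine ⟨hneg.isUnit hA htr, hA, hneg.card_eigenvalues_pos hA htr, ?_⟩
  simpa using hneg.card_eigenvalues_neg hA htr
end

section
/- (Bounded overlap of patches, K = 2^d.) Let H > 0 and 1 ≤ d ≤ 3. For k ∈ ℤ^d let c_k = (k + (1/2, …, 1/2)) H. Then for every x ∈ ℝ^d, the number of indices k ∈ ℤ^d with ‖x − c_k‖ ≤ √d · H / 2 is at most 2^d, where ‖·‖ is the Euclidean norm on ℝ^d. -/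
/-!
Since `√d < 2` for `d ≤ 3`, the radius `√d H / 2` is less than `H`. A ball of radius less than
`H` around `x` can only contain a center `c_k` if every coordinate of `k` lies within distance
less than `1` of `x i / H - 1/2`, and only the floor and the ceiling of that number qualify. This
leaves at most two choices per coordinate, hence at most `2^d` indices `k`.
-/

/-- The center `c_k = (k + (1/2,…,1/2)) H` of the grid cell `Q_k` of a Cartesian grid
of spacing `H`, as a point of `ℝ^d`. -/
noncomputable def cellCenter (d : ℕ) (H : ℝ) (k : Fin d → ℤ) :
    EuclideanSpace ℝ (Fin d) :=
  WithLp.toLp 2 (fun i => ((k i : ℝ) + 1 / 2) * H)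

theorem Int.eq_floor_or_eq_ceil_of_abs_sub_lt_one {R : Type*} [Ring R] [LinearOrder R]
    [IsStrictOrderedRing R] [FloorRing R] {n : ℤ} {b : R} (h : |(n : R) - b| < 1) :
    n = ⌊b⌋ ∨ n = ⌈b⌉ := by
  obtain ⟨hlow, hup⟩ := abs_sub_lt_iff.1 h
  rcases le_or_gt (n : R) b with hle | hlt
  · exact .inl (Int.floor_eq_iff.2 ⟨hle, sub_lt_iff_lt_add'.1 hup⟩).symm
  · exact .inr (Int.ceil_eq_iff.2 ⟨sub_lt_comm.1 hlow, hlt.le⟩).symm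

theorem finite_and_ncard_le_of_forall_abs_sub_lt_one {R ι : Type*} [Ring R] [LinearOrder R]
    [IsStrictOrderedRing R] [FloorRing R] [Fintype ι] (a : ι → R) (S : Set (ι → ℤ))
    (hS : ∀ k ∈ S, ∀ i, |(k i : R) - a i| < 1) :
    S.Finite ∧ S.ncard ≤ 2 ^ Fintype.card ι := by
  classical
  set T : Finset (ι → ℤ) := Fintype.piFinset fun i => {⌊a i⌋, ⌈a i⌉}
  have hST : S ⊆ T := fun k hk => by
    simpa [T] using fun i => Int.eq_floor_or_eq_ceil_of_abs_sub_lt_one (hS k hk i)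
  refine ⟨T.finite_toSet.subset hST, (Set.ncard_le_ncard hST T.finite_toSet).trans ?_⟩
  rw [Set.ncard_coe_finset, Fintype.card_piFinset, ← Finset.card_univ]
  exact Finset.prod_le_pow_card _ _ _ fun i _ => Finset.card_le_two

theorem abs_sub_lt_one_of_norm_sub_cellCenter_lt {d : ℕ} {H : ℝ} (hH : 0 < H)
    {x : EuclideanSpace ℝ (Fin d)} {k : Fin d → ℤ} (h : ‖x - cellCenter d H k‖ < H)
    (i : Fin d) : |(k i : ℝ) - (x i / H - 1 / 2)| < 1 := by
  have hi : |x i - ((k i : ℝ) + 1 / 2) * H| < H := by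
    simpa [cellCenter] using (PiLp.norm_apply_le (x - cellCenter d H k) i).trans_lt h
  rwa [show (k i : ℝ) - (x i / H - 1 / 2) = -(x i - ((k i : ℝ) + 1 / 2) * H) / H by
      field_simp; ring, abs_div, abs_neg, abs_of_pos hH, div_lt_one hH]

theorem finite_and_ncard_le_of_lt_spacing (d : ℕ) {H r : ℝ} (hH : 0 < H) (hr : r < H)
    (x : EuclideanSpace ℝ (Fin d)) :
    {k : Fin d → ℤ | ‖x - cellCenter d H k‖ ≤ r}.Finite ∧
    {k : Fin d → ℤ | ‖x - cellCenter d H k‖ ≤ r}.ncard ≤ 2 ^ d := by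
  simpa using finite_and_ncard_le_of_forall_abs_sub_lt_one (fun i => x i / H - 1 / 2) _
    fun k hk => abs_sub_lt_one_of_norm_sub_cellCenter_lt hH (hk.trans_lt hr)

theorem stmt15_general (d : ℕ) (hd3 : d ≤ 3) (H : ℝ) (hH : 0 < H)
    (x : EuclideanSpace ℝ (Fin d)) :
    {k : Fin d → ℤ | ‖x - cellCenter d H k‖ ≤ Real.sqrt d * H / 2}.Finite ∧
    {k : Fin d → ℤ | ‖x - cellCenter d H k‖ ≤ Real.sqrt d * H / 2}.ncard ≤ 2 ^ d := by
  have hsqrt : Real.sqrt d < 2 := by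
    have hd : (d : ℝ) ≤ 3 := by exact_mod_cast hd3
    rw [Real.sqrt_lt' two_pos]
    linarith
  refine finite_and_ncard_le_of_lt_spacing d hH ?_ x
  linarith [mul_lt_mul_of_pos_right hsqrt hH]

/-- Bounded overlap of patches: for `1 ≤ d ≤ 3` and any point `x ∈ ℝ^d`, at most `2^d`
of the closed balls of radius `√d H / 2` centered at the cell centers `c_k` of a
Cartesian grid of spacing `H > 0` contain `x`. -/
theorem stmt15 (d : ℕ) (hd1 : 1 ≤ d) (hd3 : d ≤ 3) (H : ℝ) (hH : 0 < H)
    (x : EuclideanSpace ℝ (Fin d)) :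
    {k : Fin d → ℤ | ‖x - cellCenter d H k‖ ≤ Real.sqrt d * H / 2}.Finite ∧
    {k : Fin d → ℤ | ‖x - cellCenter d H k‖ ≤ Real.sqrt d * H / 2}.ncard ≤ 2 ^ d :=
  stmt15_general d hd3 H hH x
end
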